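/- Let φ be a minimal diagonal quasilinear p-form over F with 1 ∈ D_F(φ). Let n ≥ 2 and let b₁,…,bₙ ∈ D_F(φ) satisfy [Fᵖ(b₁,…,bₙ) : Fᵖ] = pⁿ (i.e., {b₁,…,bₙ} is p-independent over F). Let S be the set of functions λ : {1,…,n} → {0,…,p−1}, and let β = Σ_{λ∈S} x_λᵖ ∏ᵢ bᵢ^{λ(i)} with x_λ ∈ F. Then β ∈ D_F(φ) if and only if x_λ = 0 for every λ ∈ S with Σᵢ λ(i) ≥ 2 (equivalently, if and only if β = y₀ᵖ + Σᵢ bᵢ yᵢᵖ for some y₀,…,yₙ ∈ F). -/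

import Mathlib

/-!
Diagonal quasilinear `p`-forms over a field `F` of characteristic `p`,
following Hoffmann and Zemková. A form of dimension `n` is recorded by its
coefficient tuple `a : ι → F` (for a finite index type `ι`), the form being
`x ↦ ∑ i, a i * (x i)^p`.
-/

universe u

namespace QLF

open scoped BigOperators

/-- Evaluation of the diagonal quasilinear `p`-form with coefficients `a` at `x`. -/
def eval (p : ℕ) {F : Type*} [CommRing F] {ι : Type*} [Fintype ι]
    (a : ι → F) (x : ι → F) : F :=
  ∑ i, a i * x i ^ p

/-- A form is isotropic if it has a nontrivial zero. -/
def Isotropic (p : ℕ) {F : Type*} [CommRing F] {ι : Type*} [Fintype ι] (a : ι → F) : Prop :=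
  ∃ x : ι → F, x ≠ 0 ∧ eval p a x = 0

/-- A form is anisotropic if it has no nontrivial zero. -/
def Anisotropic (p : ℕ) {F : Type*} [CommRing F] {ι : Type*} [Fintype ι] (a : ι → F) : Prop :=
  ¬ Isotropic p a

/-- In characteristic `p`, the zero set of a diagonal quasilinear `p`-form is a
linear subspace. -/
def zeroSubmodule (p : ℕ) [Fact p.Prime] {F : Type*} [Field F] [CharP F p]
    {ι : Type*} [Fintype ι] (a : ι → F) : Submodule F (ι → F) where
  carrier := {x | eval p a x = 0}
  zero_mem' := by
    have hp : p ≠ 0 := (Fact.out : p.Prime).ne_zero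
    simp [eval, zero_pow hp]
  add_mem' := by
    intro x y hx hy
    haveI : ExpChar F p := .prime Fact.out
    have hxy : eval p a (x + y) = eval p a x + eval p a y := by
      simp only [eval, Pi.add_apply]
      rw [← Finset.sum_add_distrib]
      exact Finset.sum_congr rfl fun i _ => by rw [add_pow_char, mul_add]
    simp only [Set.mem_setOf_eq] at *
    rw [hxy, hx, hy, add_zero]
  smul_mem' := by
    intro c x hx
    simp only [Set.mem_setOf_eq] at *
    have hcx : eval p a (c • x) = c ^ p * eval p a x := by
      simp only [eval, Pi.smul_apply, smul_eq_mul, Finset.mul_sum]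
      exact Finset.sum_congr rfl fun i _ => by rw [mul_pow]; ring
    rw [hcx, hx, mul_zero]

/-- The defect `i₀` of a form: the dimension of its zero set. -/
noncomputable def defect (p : ℕ) [Fact p.Prime] {F : Type*} [Field F] [CharP F p]
    {ι : Type*} [Fintype ι] (a : ι → F) : ℕ :=
  Module.finrank F (zeroSubmodule p a)

/-- Isometry of forms: a linear bijection carrying one form into the other. -/
def Isometric (p : ℕ) {F : Type*} [Field F] {ι κ : Type*} [Fintype ι] [Fintype κ]
    (a : ι → F) (b : κ → F) : Prop :=
  ∃ T : (ι → F) ≃ₗ[F] (κ → F), ∀ x, eval p a x = eval p b (T x)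

/-- `a` is a subform of `b`. -/
def Subform (p : ℕ) {F : Type*} [Field F] {ι κ : Type*} [Fintype ι] [Fintype κ]
    (a : ι → F) (b : κ → F) : Prop :=
  ∃ T : (ι → F) →ₗ[F] (κ → F), Function.Injective T ∧ ∀ x, eval p a x = eval p b (T x)

/-- Similarity of forms: `a ≃ c·b` for some scalar `c ≠ 0`. -/
def Similar (p : ℕ) {F : Type*} [Field F] {ι κ : Type*} [Fintype ι] [Fintype κ]
    (a : ι → F) (b : κ → F) : Prop :=
  ∃ c : F, c ≠ 0 ∧ Isometric p a (fun i => c * b i)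

/-- Vishik equivalence: same dimension, and equal defects over every field
extension `E/F`. -/
def VishikEquiv (p : ℕ) [Fact p.Prime] {F : Type u} [Field F] [CharP F p]
    {ι κ : Type*} [Fintype ι] [Fintype κ] (a : ι → F) (b : κ → F) : Prop :=
  Fintype.card ι = Fintype.card κ ∧
    ∀ (E : Type u) [Field E] [CharP E p] (f : F →+* E),
      defect p (f ∘ a) = defect p (f ∘ b)

/-- Weak Vishik equivalence: same dimension, and equal defects over every field
extension of the shape `E = F(α)` with `αᵖ ∈ F` (this includes `E = F`). -/
def WeakVishikEquiv (p : ℕ) [Fact p.Prime] {F : Type u} [Field F] [CharP F p]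
    {ι κ : Type*} [Fintype ι] [Fintype κ] (a : ι → F) (b : κ → F) : Prop :=
  Fintype.card ι = Fintype.card κ ∧
    ∀ (E : Type u) [Field E] [CharP E p] (f : F →+* E) (α : E),
      α ^ p ∈ Set.range ⇑f →
      Subfield.closure (insert α (Set.range ⇑f)) = ⊤ →
      defect p (f ∘ a) = defect p (f ∘ b)

/-- The set `Fᵖ` of `p`-th powers. -/
def pSet (p : ℕ) (F : Type*) [Field F] : Set F := Set.range fun x : F => x ^ p

/-- The subfield `Fᵖ` of `p`-th powers (in characteristic `p` the set of `p`-th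
powers is already a subfield, so the closure adds nothing). -/
def pthSubfield (p : ℕ) (F : Type*) [Field F] : Subfield F :=
  Subfield.closure (pSet p F)

/-- The subfield `Fᵖ(s)` generated by a set `s` over `Fᵖ`. -/
def adjoin (p : ℕ) {F : Type*} [Field F] (s : Set F) : Subfield F :=
  Subfield.closure (pSet p F ∪ s)

/-- The degree `[N : k]` of a subfield `N` over a subfield `k` (for `k ≤ N`,
the `k`-span of `N` in `F` is `N` itself, so this is the `k`-dimension of `N`). -/
noncomputable def degOver {F : Type*} [Field F] (k : Subfield F) (N : Subfield F) : ℕ :=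
  Module.finrank k (Submodule.span k (N : Set F))

/-- The set `D_F(φ)` of values of the form. -/
def values (p : ℕ) {F : Type*} [CommRing F] {ι : Type*} [Fintype ι] (a : ι → F) : Set F :=
  Set.range (eval p a)

/-- The norm field `N_F(φ)`: the subfield generated over `Fᵖ` by all quotients
of nonzero values of `φ`. -/
def normField (p : ℕ) {F : Type*} [Field F] {ι : Type*} [Fintype ι] (a : ι → F) : Subfield F :=
  adjoin p {z : F | ∃ u ∈ values p a, ∃ v ∈ values p a, u ≠ 0 ∧ v ≠ 0 ∧ z = u / v}

/-- The norm degree `ndeg_F(φ) = [N_F(φ) : Fᵖ]`. -/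
noncomputable def ndeg (p : ℕ) {F : Type*} [Field F] {ι : Type*} [Fintype ι] (a : ι → F) : ℕ :=
  degOver (pthSubfield p F) (normField p a)

/-- An anisotropic form is minimal if `ndeg_F(φ) = p^(dim φ - 1)`. -/
def Minimal (p : ℕ) {F : Type*} [Field F] {ι : Type*} [Fintype ι] (a : ι → F) : Prop :=
  Anisotropic p a ∧ ndeg p a = p ^ (Fintype.card ι - 1)

/-- The quasi-Pfister form `⟪b₁,…,bₙ⟫`: its coefficients are all products
`b₁^{e₁}⋯bₙ^{eₙ}` with `0 ≤ eᵢ ≤ p-1`. -/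
def pfister (p : ℕ) {F : Type*} [CommRing F] {n : ℕ} (b : Fin n → F) :
    (Fin n → Fin p) → F :=
  fun e => ∏ i, b i ^ (e i : ℕ)

/-- A form is a quasi-Pfister form if it is isometric to some `⟪b₁,…,bₙ⟫`
with all `bᵢ ∈ F×`. -/
def IsQuasiPfister (p : ℕ) {F : Type*} [Field F] {ι : Type*} [Fintype ι] (a : ι → F) : Prop :=
  ∃ (n : ℕ) (b : Fin n → F), (∀ i, b i ≠ 0) ∧ Isometric p a (pfister p b)

/-- `a` is a quasi-Pfister neighbor of the form `π`: `c·a ⊆ π` for some `c ≠ 0`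
and `p · dim a > dim π`. -/
def IsNeighborOf (p : ℕ) {F : Type*} [Field F] {ι κ : Type*} [Fintype ι] [Fintype κ]
    (a : ι → F) (π : κ → F) : Prop :=
  ∃ c : F, c ≠ 0 ∧ Subform p (fun i => c * a i) π ∧ p * Fintype.card ι > Fintype.card κ

/-- `a` is a quasi-Pfister neighbor (of some quasi-Pfister form). -/
def IsQPNeighbor (p : ℕ) {F : Type*} [Field F] {ι : Type*} [Fintype ι] (a : ι → F) : Prop :=
  ∃ (n : ℕ) (b : Fin n → F), (∀ i, b i ≠ 0) ∧ IsNeighborOf p a (pfister p b)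

/-- `a` is a quasi-Pfister neighbor of codimension one of some anisotropic
quasi-Pfister form: `dim π - dim a = 1`. -/
def IsQPNeighborCodimOne (p : ℕ) {F : Type*} [Field F] {ι : Type*} [Fintype ι]
    (a : ι → F) : Prop :=
  ∃ (n : ℕ) (b : Fin n → F), (∀ i, b i ≠ 0) ∧ Anisotropic p (pfister p b) ∧
    IsNeighborOf p a (pfister p b) ∧ Fintype.card ι + 1 = p ^ n

/-- Tensor product of diagonal forms: coefficients `aᵢ · bⱼ`. -/
def tensor (p : ℕ) {F : Type*} [CommRing F] {ι κ : Type*}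
    (a : ι → F) (b : κ → F) : ι × κ → F :=
  fun ik => a ik.1 * b ik.2

/-- The set `G_F(φ) = {x ∈ F× : xφ ≃ φ} ∪ {0}` of similarity factors. -/
def simFactors (p : ℕ) {F : Type*} [Field F] {ι : Type*} [Fintype ι] (a : ι → F) : Set F :=
  {x | x ≠ 0 ∧ Isometric p (fun i => x * a i) a} ∪ {0}

/-- `b` is the anisotropic part of `a`: `b` is anisotropic and
`a ≃ b ⊥ (m × ⟨0⟩)` for some `m`. -/
def IsAnisotropicPart (p : ℕ) {F : Type*} [Field F] {ι κ : Type*} [Fintype ι] [Fintype κ]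
    (a : ι → F) (b : κ → F) : Prop :=
  Anisotropic p b ∧ ∃ m : ℕ, Isometric p a (Sum.elim b fun _ : Fin m => (0 : F))

/-- `⟪c₁,…,cₘ⟫` is (a representative of) the norm form of `a`:
`N_F(a) = Fᵖ(c₁,…,cₘ)` and `ndeg_F(a) = pᵐ`. -/
def IsNormForm (p : ℕ) {F : Type*} [Field F] {ι : Type*} [Fintype ι] (a : ι → F)
    {m : ℕ} (c : Fin m → F) : Prop :=
  normField p a = adjoin p (Set.range c) ∧ ndeg p a = p ^ m

end QLF

/-!
Since `1 ∈ D_F(φ)`, the norm field is `Fᵖ(D_F(φ))`. Extend `1, b₁, …, bₙ` to an `Fᵖ`-basis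
`1, b₁, …, bₙ, c₁, …, cₖ` of the `Fᵖ`-space `D_F(φ)`; then `N_F(φ) = Fᵖ(b, c)`. This field is
spanned by the `p^(n+k)` monomials in `b, c` with exponents below `p`, and `n + k + 1 ≤ dim φ`,
so minimality of `φ` forces these monomials to be `Fᵖ`-linearly independent. An element
`β = Σ x_λᵖ b^λ` of `D_F(φ)` is an `Fᵖ`-combination of `1, b, c`, i.e. of monomials of degree
at most one, and comparing coefficients kills `x_λ` whenever `Σ λ(i) ≥ 2`. Conversely
`D_F(φ)` is an `Fᵖ`-space containing `1` and the `bᵢ`.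
-/

namespace QLF

open Function Module Submodule

section PthPowers

variable {p : ℕ} {F : Type*} [Field F]

theorem pow_mem_pthSubfield (t : F) : t ^ p ∈ pthSubfield p F :=
  Subfield.subset_closure ⟨t, rfl⟩

theorem mem_pthSubfield_iff [Fact p.Prime] [CharP F p] {x : F} :
    x ∈ pthSubfield p F ↔ ∃ t, t ^ p = x := by
  have : ExpChar F p := .prime Fact.out
  have hfrob : pSet p F = ((frobenius F p).fieldRange : Set F) := by
    ext y; simp [pSet, frobenius_def]
  rw [pthSubfield, hfrob, Subfield.closure_eq]
  rfl

theorem pthSubfield_le_adjoin (s : Set F) : pthSubfield p F ≤ adjoin p s :=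
  Subfield.closure_mono Set.subset_union_left

theorem span_subset_adjoin {s t : Set F} (h : t ⊆ adjoin p s) :
    (span (pthSubfield p F) t : Set F) ⊆ adjoin p s := by
  intro x hx
  induction hx using Submodule.span_induction with
  | mem x hx => exact h hx
  | zero => exact zero_mem _
  | add x y _ _ hx hy => exact add_mem hx hy
  | smul a x _ hx => exact mul_mem (pthSubfield_le_adjoin s a.2) hx

theorem isAlgebraic_pthSubfield [Fact p.Prime] (x : F) : IsAlgebraic (pthSubfield p F) x :=
  (IsIntegral.of_pow (Fact.out : p.Prime).pos
    (isIntegral_algebraMap (x := (⟨x ^ p, pow_mem_pthSubfield x⟩ : pthSubfield p F)))).isAlgebraic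

end PthPowers

section Exponents

variable {p : ℕ} [Fact p.Prime] {ι : Type*} [DecidableEq ι]

theorem val_one_fin : ((1 : Fin p) : ℕ) = 1 := by
  rw [Fin.val_one', Nat.mod_eq_of_lt (Fact.out : p.Prime).one_lt]

variable (p) in
def affineExponent (o : Option ι) : ι → Fin p :=
  o.elim 0 (Pi.single · 1)

theorem val_affineExponent (o : Option ι) (i : ι) :
    (affineExponent p o i : ℕ) = if o = some i then 1 else 0 := by
  cases o with
  | none => simp [affineExponent]
  | some j =>
    by_cases h : i = j <;>
      simp [affineExponent, h, eq_comm, Nat.mod_eq_of_lt (Fact.out : p.Prime).one_lt]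

theorem affineExponent_injective : Injective (affineExponent p (ι := ι)) := by
  intro o o' h
  refine Option.ext fun i => ?_
  have hi := congrArg Fin.val (congrFun h i)
  simp only [val_affineExponent] at hi
  split_ifs at hi <;> simp_all

variable [Fintype ι]

theorem sum_affineExponent_le_one (o : Option ι) : ∑ i, (affineExponent p o i : ℕ) ≤ 1 := by
  cases o <;> simp [val_affineExponent]

theorem mem_range_affineExponent {μ : ι → Fin p} (hμ : ∑ i, (μ i : ℕ) ≤ 1) :
    μ ∈ Set.range (affineExponent p) := by
  by_cases h0 : μ = 0
  · exact ⟨none, h0.symm⟩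
  obtain ⟨i, hi⟩ : ∃ i, μ i ≠ 0 := by simpa [funext_iff] using h0
  have hi' : (μ i : ℕ) ≠ 0 := Fin.val_ne_zero_iff.mpr hi
  have hpair (j : ι) (hj : j ≠ i) : (μ i : ℕ) + μ j ≤ 1 :=
    calc (μ i : ℕ) + μ j = ∑ k ∈ {i, j}, (μ k : ℕ) :=
          (Finset.sum_pair (f := fun k => (μ k : ℕ)) hj.symm).symm
      _ ≤ ∑ k, (μ k : ℕ) := Finset.sum_le_sum_of_subset (Finset.subset_univ _)
      _ ≤ 1 := hμ
  refine ⟨some i, funext fun j => Fin.ext ?_⟩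
  rw [val_affineExponent]
  by_cases hj : j = i
  · subst hj
    rw [if_pos rfl]
    have := Finset.single_le_sum (fun j _ => Nat.zero_le (μ j : ℕ)) (Finset.mem_univ j)
    omega
  · have := hpair j hj
    rw [if_neg (by simpa [eq_comm] using hj)]
    omega

end Exponents

section Monomials

variable {p : ℕ} [Fact p.Prime] {F : Type*} [Field F] {ι : Type*} [Fintype ι]

/-- The coefficients of the quasi-Pfister form `⟪c⟫` over an arbitrary finite index type. -/
def pMonomial (p : ℕ) (c : ι → F) (μ : ι → Fin p) : F := ∏ i, c i ^ (μ i : ℕ)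

theorem pMonomial_zero (c : ι → F) : pMonomial p c 0 = 1 := by
  simp [pMonomial]

theorem pMonomial_single [DecidableEq ι] (c : ι → F) (i : ι) :
    pMonomial p c (Pi.single i 1) = c i := by
  rw [pMonomial, Finset.prod_eq_single i (fun j _ hj => by simp [Pi.single_eq_of_ne hj]) (by simp),
    Pi.single_eq_same, val_one_fin, pow_one]

theorem pMonomial_affineExponent [DecidableEq ι] (c : ι → F) (o : Option ι) :
    pMonomial p c (affineExponent p o) = o.elim 1 c := by
  cases o
  exacts [pMonomial_zero c, pMonomial_single c _]

theorem sum_mul_pMonomial_eq_of_high_eq_zero [DecidableEq ι] (c : ι → F)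
    (y : (ι → Fin p) → F) (hy : ∀ μ, 2 ≤ ∑ i, (μ i : ℕ) → y μ = 0) :
    ∑ μ, y μ * pMonomial p c μ = y 0 + ∑ i, c i * y (Pi.single i 1) := by
  rw [← Fintype.sum_of_injective (affineExponent p) affineExponent_injective
    (fun o => y (affineExponent p o) * o.elim 1 c) _
    (fun μ hμ => by
      rw [hy μ (by by_contra h; exact hμ (mem_range_affineExponent (by omega))), zero_mul])
    (fun o => by rw [pMonomial_affineExponent]), Fintype.sum_option]
  simp [affineExponent, mul_comm]

theorem pMonomial_mul_pMonomial_mem_span (c : ι → F) (μ ν : ι → Fin p) :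
    pMonomial p c μ * pMonomial p c ν ∈ span (pthSubfield p F) (Set.range (pMonomial p c)) := by
  have hp := (Fact.out : p.Prime).pos
  -- exponents add with carries, and each carry contributes a `p`-th power
  let r : ι → Fin p := fun i => ⟨((μ i : ℕ) + ν i) % p, Nat.mod_lt _ hp⟩
  have key : pMonomial p c μ * pMonomial p c ν =
      (∏ i, c i ^ (((μ i : ℕ) + ν i) / p)) ^ p * pMonomial p c r := by
    simp only [pMonomial, ← Finset.prod_mul_distrib, ← Finset.prod_pow, ← pow_add, ← pow_mul]
    exact Finset.prod_congr rfl fun i _ => congrArg (c i ^ ·) (Nat.div_add_mod' _ _).symm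
  rw [key]
  exact smul_mem _ (⟨_, pow_mem_pthSubfield _⟩ : pthSubfield p F) (subset_span ⟨r, rfl⟩)

theorem one_mem_span_pMonomial (c : ι → F) :
    (1 : F) ∈ span (pthSubfield p F) (Set.range (pMonomial p c)) :=
  pMonomial_zero (p := p) c ▸ subset_span ⟨0, rfl⟩

theorem mul_mem_span_pMonomial (c : ι → F) {x y : F}
    (hx : x ∈ span (pthSubfield p F) (Set.range (pMonomial p c)))
    (hy : y ∈ span (pthSubfield p F) (Set.range (pMonomial p c))) :
    x * y ∈ span (pthSubfield p F) (Set.range (pMonomial p c)) := by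
  have hmul : span (pthSubfield p F) (Set.range (pMonomial p c)) *
      span (pthSubfield p F) (Set.range (pMonomial p c)) ≤
        span (pthSubfield p F) (Set.range (pMonomial p c)) := by
    rw [span_mul_span, span_le]
    rintro _ ⟨_, ⟨μ, rfl⟩, _, ⟨ν, rfl⟩, rfl⟩
    exact pMonomial_mul_pMonomial_mem_span c μ ν
  exact hmul (mul_mem_mul hx hy)

variable (p) in
/-- The span of the monomials is closed under inverses because `F` is algebraic over `Fᵖ`. -/
def pMonomialField (c : ι → F) : IntermediateField (pthSubfield p F) F :=
  ((span (pthSubfield p F) (Set.range (pMonomial p c))).toSubalgebra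
    (one_mem_span_pMonomial c) (fun _ _ => mul_mem_span_pMonomial c)).toIntermediateField
    fun x hx => Subalgebra.inv_mem_of_algebraic _ (x := ⟨x, hx⟩) (isAlgebraic_pthSubfield (p := p) x)

theorem mem_pMonomialField {c : ι → F} {x : F} :
    x ∈ pMonomialField p c ↔ x ∈ span (pthSubfield p F) (Set.range (pMonomial p c)) :=
  Iff.rfl

theorem span_adjoin_range_eq (c : ι → F) :
    span (pthSubfield p F) (adjoin p (Set.range c) : Set F) =
      span (pthSubfield p F) (Set.range (pMonomial p c)) := by
  classical
  apply le_antisymm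
  · rw [span_le]
    refine Subfield.closure_le (t := (pMonomialField p c).toSubfield) |>.2 ?_
    rintro _ (⟨t, rfl⟩ | ⟨i, rfl⟩)
    · refine mem_pMonomialField.2 ?_
      simpa [Subfield.smul_def] using
        smul_mem _ (⟨t ^ p, pow_mem_pthSubfield t⟩ : pthSubfield p F)
          (one_mem_span_pMonomial (p := p) c)
    · exact pMonomial_single (p := p) c i ▸ subset_span ⟨_, rfl⟩
  · refine span_mono ?_
    rintro _ ⟨μ, rfl⟩
    exact Subfield.prod_mem _ fun i _ =>
      Subfield.pow_mem _ (Subfield.subset_closure (Set.mem_union_right _ (Set.mem_range_self i))) _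

theorem degOver_adjoin_range_eq (c : ι → F) :
    degOver (pthSubfield p F) (adjoin p (Set.range c)) =
      finrank (pthSubfield p F) (span (pthSubfield p F) (Set.range (pMonomial p c))) := by
  rw [degOver, span_adjoin_range_eq]

theorem degOver_adjoin_range_le (c : ι → F) :
    degOver (pthSubfield p F) (adjoin p (Set.range c)) ≤ p ^ Fintype.card ι := by
  classical
  rw [degOver_adjoin_range_eq]
  exact (finrank_range_le_card _).trans_eq (by simp)

theorem linearIndependent_pMonomial_of_degOver_eq (c : ι → F)
    (h : degOver (pthSubfield p F) (adjoin p (Set.range c)) = p ^ Fintype.card ι) :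
    LinearIndependent (pthSubfield p F) (pMonomial p c) := by
  classical
  rw [linearIndependent_iff_card_eq_finrank_span, Set.finrank, ← degOver_adjoin_range_eq, h]
  simp

end Monomials

section Values

variable {p : ℕ} [Fact p.Prime] {F : Type*} [Field F] [CharP F p] {ι : Type*} [Fintype ι]

theorem eval_add (φ x y : ι → F) : eval p φ (x + y) = eval p φ x + eval p φ y := by
  have : ExpChar F p := .prime Fact.out
  simp only [eval, Pi.add_apply, add_pow_char, mul_add, Finset.sum_add_distrib]

omit [Fact p.Prime] [CharP F p] in
theorem eval_smul (φ : ι → F) (t : F) (x : ι → F) : eval p φ (t • x) = t ^ p * eval p φ x := by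
  simp only [eval, Pi.smul_apply, smul_eq_mul, mul_pow, Finset.mul_sum]
  exact Finset.sum_congr rfl fun i _ => by ring

variable (p) in
def valuesSubmodule (φ : ι → F) : Submodule (pthSubfield p F) F where
  carrier := values p φ
  zero_mem' := ⟨0, by simp [eval, (Fact.out : p.Prime).ne_zero]⟩
  add_mem' := by
    rintro _ _ ⟨x, rfl⟩ ⟨y, rfl⟩
    exact ⟨x + y, eval_add φ x y⟩
  smul_mem' := by
    rintro ⟨s, hs⟩ _ ⟨x, rfl⟩
    obtain ⟨t, rfl⟩ := mem_pthSubfield_iff.1 hs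
    exact ⟨t • x, eval_smul φ t x⟩

theorem valuesSubmodule_eq_span (φ : ι → F) :
    valuesSubmodule p φ = span (pthSubfield p F) (Set.range φ) := by
  classical
  apply le_antisymm
  · rintro _ ⟨x, rfl⟩
    exact sum_mem fun i _ => mul_comm (φ i) _ ▸
      smul_mem _ (⟨x i ^ p, pow_mem_pthSubfield _⟩ : pthSubfield p F) (subset_span ⟨i, rfl⟩)
  · rw [span_le]
    rintro _ ⟨i, rfl⟩
    exact ⟨Pi.single i 1, by simp [eval, Pi.single_apply, (Fact.out : p.Prime).ne_zero]⟩

instance (φ : ι → F) : FiniteDimensional (pthSubfield p F) (valuesSubmodule p φ) := by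
  rw [valuesSubmodule_eq_span]
  exact FiniteDimensional.span_of_finite _ (Set.finite_range φ)

theorem finrank_valuesSubmodule_le (φ : ι → F) :
    finrank (pthSubfield p F) (valuesSubmodule p φ) ≤ Fintype.card ι :=
  valuesSubmodule_eq_span φ ▸ finrank_range_le_card φ

theorem pow_add_sum_mul_pow_mem_values {φ : ι → F} (h1 : (1 : F) ∈ values p φ) {η : Type*}
    [Fintype η] {b : η → F} (hb : ∀ i, b i ∈ values p φ) (y : F) (z : η → F) :
    y ^ p + ∑ i, b i * z i ^ p ∈ values p φ := by
  change _ ∈ valuesSubmodule p φ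
  refine add_mem ?_ (sum_mem fun i _ => ?_)
  · simpa [Subfield.smul_def] using
      smul_mem (valuesSubmodule p φ) (⟨y ^ p, pow_mem_pthSubfield y⟩ : pthSubfield p F) h1
  · simpa [Subfield.smul_def, mul_comm] using
      smul_mem (valuesSubmodule p φ) (⟨z i ^ p, pow_mem_pthSubfield _⟩ : pthSubfield p F) (hb i)

omit [Fact p.Prime] [CharP F p] in
theorem values_subset_normField {φ : ι → F} (h1 : (1 : F) ∈ values p φ) :
    values p φ ⊆ normField p φ := by
  intro v hv
  by_cases hv0 : v = 0
  · exact hv0 ▸ zero_mem _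
  · exact Subfield.subset_closure
      (Set.mem_union_right _ ⟨v, hv, 1, h1, hv0, one_ne_zero, (div_one v).symm⟩)

omit [Fact p.Prime] [CharP F p] in
theorem normField_eq_adjoin {φ : ι → F} (h1 : (1 : F) ∈ values p φ) {κ : Type*} {c : κ → F}
    (hc : Set.range c ⊆ values p φ)
    (hspan : values p φ ⊆ span (pthSubfield p F) (insert 1 (Set.range c))) :
    normField p φ = adjoin p (Set.range c) := by
  have hval : values p φ ⊆ adjoin p (Set.range c) :=
    hspan.trans <| span_subset_adjoin <| Set.insert_subset (one_mem _) fun _ hx =>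
      Subfield.subset_closure (Set.mem_union_right _ hx)
  apply le_antisymm <;> refine Subfield.closure_le.2 (Set.union_subset
    (fun _ hx => Subfield.subset_closure (Set.mem_union_left _ hx)) ?_)
  · rintro _ ⟨u, hu, v, hv, -, -, rfl⟩
    exact div_mem (hval hu) (hval hv)
  · exact hc.trans (values_subset_normField h1)

end Values

section Coefficients

variable {p : ℕ} [Fact p.Prime] {F : Type*} [Field F] {η κ : Type*} [Fintype η] [Fintype κ]

theorem disjoint_span_affine_span_pMonomial {c : κ → F}
    (hc : LinearIndependent (pthSubfield p F) (pMonomial p c)) :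
    Disjoint (span (pthSubfield p F) (insert 1 (Set.range c)))
      (span (pthSubfield p F) (pMonomial p c '' {μ | 2 ≤ ∑ i, (μ i : ℕ)})) := by
  classical
  refine (hc.disjoint_span_image (s := {μ | ∑ i, (μ i : ℕ) ≤ 1}) ?_).mono_left (span_mono ?_)
  · exact Set.disjoint_left.2 fun μ h1 h2 => by simp only [Set.mem_ofPred_eq] at h1 h2; omega
  · rintro _ (rfl | ⟨i, rfl⟩)
    exacts [⟨affineExponent p none, sum_affineExponent_le_one _, pMonomial_affineExponent c _⟩,
      ⟨affineExponent p (some i), sum_affineExponent_le_one _, pMonomial_affineExponent c _⟩]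

theorem eq_zero_of_sum_smul_pMonomial_mem_span [DecidableEq η] {b : η → F} {c : κ → F}
    (hbc : LinearIndependent (pthSubfield p F) (pMonomial p (Sum.elim b c)))
    {y : (η → Fin p) → pthSubfield p F}
    (hy : ∑ μ, y μ • pMonomial p b μ ∈
      span (pthSubfield p F) (insert 1 (Set.range (Sum.elim b c))))
    {μ : η → Fin p} (hμ : 2 ≤ ∑ i, (μ i : ℕ)) : y μ = 0 := by
  classical
  let extend : (η → Fin p) → η ⊕ κ → Fin p := fun μ => Sum.elim μ 0
  have pMonomial_extend (μ) : pMonomial p (Sum.elim b c) (extend μ) = pMonomial p b μ := by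
    simp [pMonomial, extend, Fintype.prod_sum_type]
  have sum_extend (μ) : ∑ i, (extend μ i : ℕ) = ∑ i, (μ i : ℕ) := by
    simp [extend, Fintype.sum_sum_type]
  have hb : LinearIndependent (pthSubfield p F) (pMonomial p b) := by
    simpa [comp_def, pMonomial_extend] using
      hbc.comp extend fun μ ν h => funext fun i => congrFun h (Sum.inl i)
  set high := ∑ μ, (if 2 ≤ ∑ i, (μ i : ℕ) then y μ else 0) • pMonomial p b μ
  set low := ∑ μ, (if 2 ≤ ∑ i, (μ i : ℕ) then 0 else y μ) • pMonomial p b μ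
  have hsplit : ∑ μ, y μ • pMonomial p b μ = low + high := by
    rw [← Finset.sum_add_distrib]
    exact Finset.sum_congr rfl fun μ _ => by split_ifs <;> simp
  have hlow : low ∈ span (pthSubfield p F) (insert 1 (Set.range (Sum.elim b c))) := by
    refine sum_mem fun ν _ => ?_
    split_ifs with hν
    · simp
    obtain ⟨o, rfl⟩ := mem_range_affineExponent (p := p) (by omega : ∑ i, (ν i : ℕ) ≤ 1)
    refine smul_mem _ _ (subset_span ?_)
    rw [pMonomial_affineExponent]
    cases o
    exacts [Set.mem_insert _ _, Set.mem_insert_of_mem _ ⟨Sum.inl _, rfl⟩]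
  have hhigh : high ∈ span (pthSubfield p F)
      (pMonomial p (Sum.elim b c) '' {μ | 2 ≤ ∑ i, (μ i : ℕ)}) := by
    refine sum_mem fun ν _ => ?_
    split_ifs with hν
    · exact smul_mem _ _ (subset_span ⟨extend ν, show 2 ≤ ∑ i, (extend ν i : ℕ) by
        rwa [sum_extend], pMonomial_extend ν⟩)
    · simp
  have hhigh_zero : high = 0 :=
    disjoint_def.1 (disjoint_span_affine_span_pMonomial hbc) high
      (eq_sub_of_add_eq' hsplit.symm ▸ sub_mem hy hlow) hhigh
  simpa [hμ] using Fintype.linearIndependent_iff.1 hb _ hhigh_zero μ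

end Coefficients

section Minimal

variable {p : ℕ} [Fact p.Prime] {F : Type u} [Field F] [CharP F p] {ι : Type*} [Fintype ι]

theorem exists_linearIndependent_pMonomial_sumElim {φ : ι → F} (hmin : Minimal p φ)
    (h1 : (1 : F) ∈ values p φ) {η : Type*} [Fintype η] {b : η → F}
    (hb : ∀ i, b i ∈ values p φ)
    (hlin : LinearIndependent (pthSubfield p F) (fun o : Option η => o.elim 1 b)) :
    ∃ (κ : Type u) (_ : Fintype κ) (c : κ → F),
      LinearIndependent (pthSubfield p F) (pMonomial p (Sum.elim b c)) ∧
        values p φ ⊆ span (pthSubfield p F) (insert 1 (Set.range (Sum.elim b c))) := by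
  classical
  let D := valuesSubmodule p φ
  let e : Option η → D := fun o => ⟨o.elim 1 b, by cases o; exacts [h1, hb _]⟩
  have he : LinearIndependent (pthSubfield p F) e := LinearIndependent.of_comp D.subtype hlin
  let B := Basis.sumExtend he
  have : Finite (Option η ⊕ Basis.sumExtendIndex he) := Module.Finite.finite_basis B
  have : Finite (Basis.sumExtendIndex he) :=
    Finite.of_injective (Sum.inr (α := Option η)) Sum.inr_injective
  have : Fintype (Basis.sumExtendIndex he) := Fintype.ofFinite _
  let c : Basis.sumExtendIndex he → F := fun v => ((v : D) : F)
  have hspan : values p φ ⊆ span (pthSubfield p F) (insert 1 (Set.range (Sum.elim b c))) := by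
    intro v hv
    have hv' : (⟨v, hv⟩ : D) ∈ span (pthSubfield p F)
        (he.linearIndepOn_id.extend (Set.subset_univ _)) := by
      rw [← Basis.range_extend, Basis.span_eq]; trivial
    have hvF := mem_map_of_mem (f := D.subtype) hv'
    rw [← span_image] at hvF
    refine span_mono ?_ hvF
    rintro _ ⟨w, hw, rfl⟩
    by_cases hwe : w ∈ Set.range e
    · obtain ⟨_ | i, rfl⟩ := hwe
      exacts [Set.mem_insert _ _, Set.mem_insert_of_mem _ ⟨Sum.inl i, rfl⟩]
    · exact Set.mem_insert_of_mem _ ⟨Sum.inr ⟨w, hw, hwe⟩, rfl⟩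
  refine ⟨_, inferInstance, c, linearIndependent_pMonomial_of_degOver_eq _ ?_, hspan⟩
  -- `p ^ (dim φ - 1) = [N_F(φ) : Fᵖ] ≤ p ^ (n + k)` and `n + k + 1 ≤ dim φ` force equality
  have hrange : Set.range (Sum.elim b c) ⊆ values p φ := by
    rintro _ ⟨i | w, rfl⟩
    exacts [hb i, (w : D).2]
  have hdeg : degOver (pthSubfield p F) (adjoin p (Set.range (Sum.elim b c))) =
      p ^ (Fintype.card ι - 1) := normField_eq_adjoin h1 hrange hspan ▸ hmin.2
  have hcard : Fintype.card (η ⊕ Basis.sumExtendIndex he) + 1 ≤ Fintype.card ι := by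
    have hB : finrank (pthSubfield p F) (valuesSubmodule p φ) = _ := finrank_eq_card_basis B
    have hD := finrank_valuesSubmodule_le (p := p) φ
    simp only [Fintype.card_sum, Fintype.card_option] at hB ⊢
    omega
  have hle : Fintype.card ι - 1 ≤ Fintype.card (η ⊕ Basis.sumExtendIndex he) :=
    (Nat.pow_le_pow_iff_right (Fact.out : p.Prime).one_lt).1
      (hdeg ▸ degOver_adjoin_range_le (Sum.elim b c))
  rw [hdeg]
  congr 1
  omega

end Minimal

end QLF

theorem stmt_16_general (p : ℕ) [Fact p.Prime] {F : Type u} [Field F] [CharP F p]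
    {d : ℕ} (φ : Fin d → F) (hmin : QLF.Minimal p φ)
    (h1 : (1 : F) ∈ QLF.values p φ)
    (n : ℕ) (b : Fin n → F)
    (hb : ∀ i, b i ∈ QLF.values p φ)
    (hind : QLF.degOver (QLF.pthSubfield p F) (QLF.adjoin p (Set.range b)) = p ^ n)
    (x : (Fin n → Fin p) → F) (β : F)
    (hβ : β = ∑ lam : Fin n → Fin p, x lam ^ p * ∏ i, b i ^ (lam i : ℕ)) :
    (β ∈ QLF.values p φ ↔
      ∀ lam : Fin n → Fin p, 2 ≤ ∑ i, (lam i : ℕ) → x lam = 0) ∧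
    (β ∈ QLF.values p φ ↔
      ∃ (y : F) (z : Fin n → F), β = y ^ p + ∑ i, b i * z i ^ p) := by
  have hb_indep := QLF.linearIndependent_pMonomial_of_degOver_eq b (by rwa [Fintype.card_fin])
  obtain ⟨κ, _, c, hc, hspan⟩ := QLF.exists_linearIndependent_pMonomial_sumElim hmin h1 hb <| by
    simpa [Function.comp_def, QLF.pMonomial_affineExponent] using
      hb_indep.comp _ QLF.affineExponent_injective
  have vanish (hβφ : β ∈ QLF.values p φ) (lam : Fin n → Fin p) (hlam : 2 ≤ ∑ i, (lam i : ℕ)) :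
      x lam = 0 := by
    have := QLF.eq_zero_of_sum_smul_pMonomial_mem_span hc
      (y := fun lam => ⟨x lam ^ p, QLF.pow_mem_pthSubfield _⟩) (by rw [hβ] at hβφ; exact hspan hβφ)
      hlam
    exact pow_eq_zero_iff (Fact.out : p.Prime).ne_zero |>.1 (congrArg Subtype.val this)
  have reduce (h : ∀ lam : Fin n → Fin p, 2 ≤ ∑ i, (lam i : ℕ) → x lam = 0) :
      ∃ (y : F) (z : Fin n → F), β = y ^ p + ∑ i, b i * z i ^ p :=
    ⟨x 0, fun i => x (Pi.single i 1), hβ.trans <| QLF.sum_mul_pMonomial_eq_of_high_eq_zero b _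
      fun lam hlam => by rw [h lam hlam, zero_pow (Fact.out : p.Prime).ne_zero]⟩
  have represent : (∃ (y : F) (z : Fin n → F), β = y ^ p + ∑ i, b i * z i ^ p) →
      β ∈ QLF.values p φ := by
    rintro ⟨y, z, rfl⟩
    exact QLF.pow_add_sum_mul_pow_mem_values h1 hb y z
  exact ⟨⟨vanish, represent ∘ reduce⟩, ⟨reduce ∘ vanish, represent⟩⟩

/-- Let `φ` be a minimal quasilinear `p`-form over `F` with
`1 ∈ D_F(φ)`, `n ≥ 2`, and `b₁,…,bₙ ∈ D_F(φ)` `p`-independent over `F`, i.e.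
`[Fᵖ(b₁,…,bₙ) : Fᵖ] = pⁿ`. For `β = Σ_{λ} x_λᵖ ∏ᵢ bᵢ^{λ(i)}` (λ ranging over
functions `{1,…,n} → {0,…,p-1}`), one has `β ∈ D_F(φ)` iff `x_λ = 0` for all `λ`
with `Σᵢ λ(i) ≥ 2`, equivalently iff `β = y₀ᵖ + Σᵢ bᵢ yᵢᵖ` for some `yᵢ ∈ F`. -/
theorem stmt_16 (p : ℕ) [Fact p.Prime] {F : Type u} [Field F] [CharP F p]
    {d : ℕ} (φ : Fin d → F) (hmin : QLF.Minimal p φ)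
    (h1 : (1 : F) ∈ QLF.values p φ)
    (n : ℕ) (hn : 2 ≤ n) (b : Fin n → F)
    (hb : ∀ i, b i ∈ QLF.values p φ)
    (hind : QLF.degOver (QLF.pthSubfield p F) (QLF.adjoin p (Set.range b)) = p ^ n)
    (x : (Fin n → Fin p) → F) (β : F)
    (hβ : β = ∑ lam : Fin n → Fin p, x lam ^ p * ∏ i, b i ^ (lam i : ℕ)) :
    (β ∈ QLF.values p φ ↔
      ∀ lam : Fin n → Fin p, 2 ≤ ∑ i, (lam i : ℕ) → x lam = 0) ∧
    (β ∈ QLF.values p φ ↔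
      ∃ (y : F) (z : Fin n → F), β = y ^ p + ∑ i, b i * z i ^ p) :=
  stmt_16_general p φ hmin h1 n b hb hind x β hβ
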